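/- arXiv:2512.06180 — 10 statements merged into one kernel-verified Lean document; each statement's English description precedes it below -/
import Mathlib

section
/- For every p ∈ [0,1], the inequality (1−δ)·(p·(c+g) − c) + δ·p·g < 0 holds if and only if p < p̃, where p̃ := c(1−δ)/((1−δ)(c+g) + δ·g); moreover p̃ < p*(δ), where p*(δ) := c(1−δ)/(c(1−δ) + g·(1 − δ(1−λ))). (Characterization of the dominance cut-off p̃ below which choosing the safe arm is dominant.) -/
/-- Characterization of the dominance cut-off
`p̃ = c(1−δ)/((1−δ)(c+g) + δg)`, below which the safe arm is dominant,
and the comparison `p̃ < p*(δ)`. -/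
theorem dominance_cutoff
    (c g lam δ : ℝ) (hc : 0 < c) (hg : 0 < g)
    (hlam : lam ∈ Set.Ioo (0 : ℝ) 1) (hδ : δ ∈ Set.Ioo (0 : ℝ) 1) :
    (∀ p ∈ Set.Icc (0 : ℝ) 1,
      ((1 - δ) * (p * (c + g) - c) + δ * p * g < 0 ↔
        p < c * (1 - δ) / ((1 - δ) * (c + g) + δ * g))) ∧
    c * (1 - δ) / ((1 - δ) * (c + g) + δ * g)
      < c * (1 - δ) / (c * (1 - δ) + g * (1 - δ * (1 - lam))) := by
  obtain ⟨hδ0, hδ1⟩ := hδ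
  obtain ⟨hl0, hl1⟩ := hlam
  have hD1 : 0 < (1 - δ) * (c + g) + δ * g := by nlinarith
  have hD2 : 0 < c * (1 - δ) + g * (1 - δ * (1 - lam)) := by nlinarith [mul_pos hδ0 hl0, mul_pos hg (mul_pos hδ0 hl0)]
  constructor
  · intro p _
    rw [lt_div_iff₀ hD1]
    constructor <;> intro h <;> nlinarith
  · rw [div_lt_div_iff₀ hD1 hD2]
    nlinarith [mul_pos (mul_pos (mul_pos hc (by linarith : (0:ℝ) < 1 - δ)) hg) (mul_pos hδ0 (by linarith : (0:ℝ) < 1 - lam))]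
end

section
/- For every p ∈ [0,1], the inequality (1−δ)·(p·(c+g) − c) + δ·p·λ·(1 + δ(1−λ))·g ≥ 0 holds if and only if p ≥ p̂, where p̂ := c(1−δ)/(c(1−δ) + g·(1−δ + λδ(1+δ−λδ))); moreover p̂ < p*(δ), where p*(δ) := c(1−δ)/(c(1−δ) + g·(1 − δ(1−λ))). (Indifference characterization of the encouragement cut-off p̂, which balances the cost of one extra experiment against the value of two experiments, the second outcome being learned with a one-period delay.) -/
/-- Indifference characterization of the encouragement cut-off
`p̂ = c(1−δ)/(c(1−δ) + g(1−δ + λδ(1+δ−λδ)))`, and the comparison `p̂ < p*(δ)`. -/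
theorem encouragement_cutoff
    (c g lam δ : ℝ) (hc : 0 < c) (hg : 0 < g)
    (hlam : lam ∈ Set.Ioo (0 : ℝ) 1) (hδ : δ ∈ Set.Ioo (0 : ℝ) 1) :
    (∀ p ∈ Set.Icc (0 : ℝ) 1,
      ((1 - δ) * (p * (c + g) - c) + δ * p * lam * (1 + δ * (1 - lam)) * g ≥ 0 ↔
        p ≥ c * (1 - δ) /
          (c * (1 - δ) + g * (1 - δ + lam * δ * (1 + δ - lam * δ))))) ∧
    c * (1 - δ) / (c * (1 - δ) + g * (1 - δ + lam * δ * (1 + δ - lam * δ)))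
      < c * (1 - δ) / (c * (1 - δ) + g * (1 - δ * (1 - lam))) := by
  obtain ⟨hl0, hl1⟩ := hlam
  obtain ⟨hd0, hd1⟩ := hδ
  have h1 : 0 < 1 - δ + δ * lam := by nlinarith [mul_pos hd0 hl0]
  have h2 : 0 < lam * (δ * δ) * (1 - lam) :=
    mul_pos (mul_pos hl0 (mul_pos hd0 hd0)) (sub_pos.mpr hl1)
  have hcδ : 0 < c * (1 - δ) := mul_pos hc (by linarith)
  have hA : 0 < c * (1 - δ) + g * (1 - δ + lam * δ * (1 + δ - lam * δ)) := by
    nlinarith [mul_pos hg h1, mul_pos hg h2]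
  have hB : 0 < c * (1 - δ) + g * (1 - δ * (1 - lam)) := by
    nlinarith [mul_pos hg h1]
  constructor
  · intro p hp
    rw [ge_iff_le, ge_iff_le, div_le_iff₀ hA]
    constructor
    · intro h; nlinarith
    · intro h; nlinarith
  · rw [div_lt_div_iff₀ hA hB]
    nlinarith [mul_pos hcδ (mul_pos hg h2)]
end

section
/- For every n ∈ ℕ, φ(p*_{n+1}) < p*_n, where φ(p) := (1−λ)p/(1−λp) and p*_n := c(1−δ)/(c(1−δ) + g·(1−δ + δλ(1−λ)^n)). -/
/-- For every `n`, `φ(p*_{n+1}) < p*_n`, where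
`φ(p) = (1−λ)p/(1−λp)` is the Bayesian updating map. -/
theorem phi_cutoff_succ_lt
    (c g lam δ : ℝ) (hc : 0 < c) (hg : 0 < g)
    (hlam : lam ∈ Set.Ioo (0 : ℝ) 1) (hδ : δ ∈ Set.Ioo (0 : ℝ) 1) :
    ∀ n : ℕ,
      (1 - lam) * (c * (1 - δ) / (c * (1 - δ) + g * (1 - δ + δ * lam * (1 - lam) ^ (n + 1)))) /
        (1 - lam * (c * (1 - δ) / (c * (1 - δ) + g * (1 - δ + δ * lam * (1 - lam) ^ (n + 1)))))
      < c * (1 - δ) / (c * (1 - δ) + g * (1 - δ + δ * lam * (1 - lam) ^ n)) := by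
  obtain ⟨hl0, hl1⟩ := hlam
  obtain ⟨hd0, hd1⟩ := hδ
  intro n
  have hdm : (0:ℝ) < 1 - δ := by linarith
  have hlm : (0:ℝ) < 1 - lam := by linarith
  have hA : (0:ℝ) < c * (1 - δ) := by positivity
  set A := c * (1 - δ) with hAdef
  have hpow : ∀ k : ℕ, (0:ℝ) < (1 - lam) ^ k := fun k => pow_pos hlm k
  have hB1 : (0:ℝ) < g * (1 - δ + δ * lam * (1 - lam) ^ (n + 1)) := by
    have := hpow (n + 1); positivity
  have hBn : (0:ℝ) < g * (1 - δ + δ * lam * (1 - lam) ^ n) := by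
    have := hpow n; positivity
  set B1 := g * (1 - δ + δ * lam * (1 - lam) ^ (n + 1)) with hB1def
  set Bn := g * (1 - δ + δ * lam * (1 - lam) ^ n) with hBndef
  have hD1 : (0:ℝ) < A + B1 := by linarith
  have hDn : (0:ℝ) < A + Bn := by linarith
  -- key fact: B1 - (1 - lam) * Bn = g * lam * (1-δ) > 0
  have hkey : (1 - lam) * Bn < B1 := by
    have : B1 - (1 - lam) * Bn = g * lam * (1 - δ) := by
      rw [hB1def, hBndef]; ring
    nlinarith [mul_pos (mul_pos hg hl0) hdm]
  have hp : A / (A + B1) < 1 := by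
    rw [div_lt_one hD1]; linarith
  have hden : (0:ℝ) < 1 - lam * (A / (A + B1)) := by
    have hp0 : (0:ℝ) < A / (A + B1) := div_pos hA hD1
    nlinarith
  rw [div_lt_div_iff₀ hden hDn]
  have hrw : 1 - lam * (A / (A + B1)) = (A + B1 - lam * A) / (A + B1) := by
    field_simp
  rw [hrw,
    show (1 - lam) * (A / (A + B1)) * (A + Bn) = (1 - lam) * A * (A + Bn) / (A + B1) by ring,
    show A * ((A + B1 - lam * A) / (A + B1)) = A * (A + B1 - lam * A) / (A + B1) by ring,
    div_lt_div_iff₀ hD1 hD1]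
  have hkey2 : 0 < A * (B1 - (1 - lam) * Bn) := mul_pos hA (by linarith)
  nlinarith [hkey2, mul_pos hD1 hkey2]
end

section
/- The map δ ↦ p*(δ) := c(1−δ)/(c(1−δ) + g·(1 − δ(1−λ))) is strictly decreasing on (0,1), with p*(δ) → c/(c+g) as δ → 0⁺ and p*(δ) → 0 as δ → 1⁻. Consequently p** := p*(√δ) < p*(δ) for every δ ∈ (0,1), and for every p₀ ∈ (0,1) the single-agent optimal number of experiments N* := inf{n ≥ 0 : φ^n(p₀) < p*(δ)} is at most the socially optimal number N** := inf{n ≥ 0 : φ^n(p₀) < p**}. -/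
private lemma denom_pos (c g lam : ℝ) (hc : 0 < c) (hg : 0 < g)
    (hlam : lam ∈ Set.Ioo (0:ℝ) 1) {x : ℝ} (_hx0 : 0 ≤ x) (hx1 : x ≤ 1) :
    0 < c * (1 - x) + g * (1 - x * (1 - lam)) := by
  obtain ⟨hl0, hl1⟩ := hlam
  nlinarith [mul_nonneg hc.le (sub_nonneg.mpr hx1),
    mul_pos hg (show (0:ℝ) < 1 - x * (1 - lam) by nlinarith)]

private lemma pstar_anti (c g lam : ℝ) (hc : 0 < c) (hg : 0 < g)
    (hlam : lam ∈ Set.Ioo (0:ℝ) 1) :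
    StrictAntiOn (fun x : ℝ => c * (1 - x) / (c * (1 - x) + g * (1 - x * (1 - lam))))
      (Set.Ioo 0 1) := by
  intro a ha b hb hab
  have hda := denom_pos c g lam hc hg hlam ha.1.le ha.2.le
  have hdb := denom_pos c g lam hc hg hlam hb.1.le hb.2.le
  simp only
  rw [div_lt_div_iff₀ hdb hda]
  nlinarith [mul_pos (mul_pos (mul_pos hc hg) hlam.1) (sub_pos.mpr hab)]

private lemma pstar_pos (c g lam : ℝ) (hc : 0 < c) (hg : 0 < g)
    (hlam : lam ∈ Set.Ioo (0:ℝ) 1) {x : ℝ} (_hx0 : 0 ≤ x) (hx1 : x < 1) :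
    0 < c * (1 - x) / (c * (1 - x) + g * (1 - x * (1 - lam))) := by
  apply div_pos (by nlinarith) (denom_pos c g lam hc hg hlam _hx0 hx1.le)

/-- The single-agent cut-off `p*(·)` is strictly decreasing in the
discount factor, with limits `c/(c+g)` at `0⁺` and `0` at `1⁻`; hence
`p** = p*(√δ) < p*(δ)`, and the single-agent optimal number of experiments `N*`
is at most the socially optimal number `N**`. -/
theorem pstar_decreasing_and_underexperimentation
    (c g lam δ : ℝ) (hc : 0 < c) (hg : 0 < g)
    (hlam : lam ∈ Set.Ioo (0 : ℝ) 1) (hδ : δ ∈ Set.Ioo (0 : ℝ) 1) :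
    StrictAntiOn (fun x : ℝ => c * (1 - x) / (c * (1 - x) + g * (1 - x * (1 - lam))))
      (Set.Ioo 0 1) ∧
    Filter.Tendsto (fun x : ℝ => c * (1 - x) / (c * (1 - x) + g * (1 - x * (1 - lam))))
      (nhdsWithin 0 (Set.Ioi 0)) (nhds (c / (c + g))) ∧
    Filter.Tendsto (fun x : ℝ => c * (1 - x) / (c * (1 - x) + g * (1 - x * (1 - lam))))
      (nhdsWithin 1 (Set.Iio 1)) (nhds 0) ∧
    (∀ δ' ∈ Set.Ioo (0 : ℝ) 1,
      c * (1 - Real.sqrt δ') / (c * (1 - Real.sqrt δ') + g * (1 - Real.sqrt δ' * (1 - lam)))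
        < c * (1 - δ') / (c * (1 - δ') + g * (1 - δ' * (1 - lam)))) ∧
    (∀ p₀ ∈ Set.Ioo (0 : ℝ) 1,
      sInf {n : ℕ | (fun p : ℝ => (1 - lam) * p / (1 - lam * p))^[n] p₀
          < c * (1 - δ) / (c * (1 - δ) + g * (1 - δ * (1 - lam)))}
        ≤ sInf {n : ℕ | (fun p : ℝ => (1 - lam) * p / (1 - lam * p))^[n] p₀
          < c * (1 - Real.sqrt δ) /
              (c * (1 - Real.sqrt δ) + g * (1 - Real.sqrt δ * (1 - lam)))}) := by
  obtain ⟨hl0, hl1⟩ := hlam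
  have hAnti := pstar_anti c g lam hc hg ⟨hl0, hl1⟩
  have hsqrt : ∀ δ' ∈ Set.Ioo (0:ℝ) 1,
      c * (1 - Real.sqrt δ') / (c * (1 - Real.sqrt δ') + g * (1 - Real.sqrt δ' * (1 - lam)))
        < c * (1 - δ') / (c * (1 - δ') + g * (1 - δ' * (1 - lam))) := by
    intro δ' hδ'
    have hs0 : 0 < Real.sqrt δ' := Real.sqrt_pos.mpr hδ'.1
    have hs1 : Real.sqrt δ' < 1 := by
      rw [show (1:ℝ) = Real.sqrt 1 by simp]
      exact Real.sqrt_lt_sqrt hδ'.1.le hδ'.2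
    have hlt : δ' < Real.sqrt δ' := by
      nlinarith [Real.sq_sqrt hδ'.1.le, hδ'.1, hδ'.2, hs0]
    exact hAnti hδ' ⟨hs0, hs1⟩ hlt
  refine ⟨hAnti, ?_, ?_, hsqrt, ?_⟩
  · have hcont : ContinuousAt
        (fun x : ℝ => c * (1 - x) / (c * (1 - x) + g * (1 - x * (1 - lam)))) 0 := by
      apply ContinuousAt.div (by fun_prop) (by fun_prop)
      simp; positivity
    have := hcont.tendsto.mono_left (nhdsWithin_le_nhds (s := Set.Ioi 0))
    simpa using this
  · have hcont : ContinuousAt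
        (fun x : ℝ => c * (1 - x) / (c * (1 - x) + g * (1 - x * (1 - lam)))) 1 := by
      apply ContinuousAt.div (by fun_prop) (by fun_prop)
      have : c * (1 - 1) + g * (1 - 1 * (1 - lam)) = g * lam := by ring
      simp only [this]
      positivity
    have := hcont.tendsto.mono_left (nhdsWithin_le_nhds (s := Set.Iio 1))
    simpa using this
  · intro p₀ hp₀
    set φ : ℝ → ℝ := fun p : ℝ => (1 - lam) * p / (1 - lam * p) with hφ
    set pss := c * (1 - Real.sqrt δ) /
        (c * (1 - Real.sqrt δ) + g * (1 - Real.sqrt δ * (1 - lam))) with hpss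
    set ps := c * (1 - δ) / (c * (1 - δ) + g * (1 - δ * (1 - lam))) with hps
    have hs0 : 0 < Real.sqrt δ := Real.sqrt_pos.mpr hδ.1
    have hs1 : Real.sqrt δ < 1 := by
      rw [show (1:ℝ) = Real.sqrt 1 by simp]
      exact Real.sqrt_lt_sqrt hδ.1.le hδ.2
    have hpss_pos : 0 < pss := pstar_pos c g lam hc hg ⟨hl0, hl1⟩ hs0.le hs1
    have hlt : pss < ps := hsqrt δ hδ
    -- geometric decay of iterates
    set r : ℝ := (1 - lam) / (1 - lam * p₀) with hr
    have hd0 : 0 < 1 - lam * p₀ := by nlinarith [hp₀.1, hp₀.2]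
    have hr0 : 0 ≤ r := div_nonneg (by linarith) hd0.le
    have hr1 : r < 1 := by
      rw [div_lt_one hd0]; nlinarith [hp₀.1, hp₀.2]
    have key : ∀ n : ℕ, 0 ≤ φ^[n] p₀ ∧ φ^[n] p₀ ≤ r ^ n * p₀ := by
      intro n
      induction n with
      | zero => simp [hp₀.1.le]
      | succ n ih =>
        obtain ⟨h0, h1⟩ := ih
        have hrn1 : r ^ n ≤ 1 := pow_le_one₀ hr0 hr1.le
        have hle : φ^[n] p₀ ≤ p₀ := h1.trans (by nlinarith [hp₀.1])
        have hdq : 0 < 1 - lam * φ^[n] p₀ := by nlinarith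
        rw [Function.iterate_succ_apply']
        constructor
        · exact div_nonneg (by nlinarith) hdq.le
        · have step : φ (φ^[n] p₀) ≤ r * φ^[n] p₀ := by
            show (1 - lam) * (φ^[n] p₀) / (1 - lam * φ^[n] p₀) ≤ r * φ^[n] p₀
            rw [hr, div_mul_eq_mul_div, div_le_div_iff₀ hdq hd0]
            nlinarith [mul_nonneg (mul_nonneg (sub_nonneg.mpr hl1.le) h0)
              (mul_nonneg hl0.le (sub_nonneg.mpr hle))]
          calc φ (φ^[n] p₀) ≤ r * φ^[n] p₀ := step
            _ ≤ r * (r ^ n * p₀) := by nlinarith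
            _ = r ^ (n + 1) * p₀ := by ring
    have hne : {n : ℕ | φ^[n] p₀ < pss}.Nonempty := by
      obtain ⟨n, hn⟩ := exists_pow_lt_of_lt_one (div_pos hpss_pos hp₀.1) hr1
      refine ⟨n, ?_⟩
      have := (key n).2
      have : r ^ n * p₀ < pss := by
        rw [lt_div_iff₀ hp₀.1] at hn; linarith [(key n).2]
      exact lt_of_le_of_lt (key n).2 this
    have hmem := Nat.sInf_mem hne
    exact Nat.sInf_le (lt_trans hmem hlt)
end

section
/- One has φ(φ(p̂)) < p** < p̂, where φ(p) := (1−λ)p/(1−λp), p̂ := c(1−δ)/(c(1−δ) + g·(1−δ + λδ(1+δ−λδ))), and p** := p*(√δ) with p*(x) := c(1−x)/(c(1−x) + g·(1 − x(1−λ))). (The encouragement cut-off and the social-planner cut-off are within two Bayesian updates of each other.) -/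
lemma phi_div (lam X Y : ℝ) (hl : lam ∈ Set.Ioo (0:ℝ) 1) (hX : 0 < X) (hY : 0 < Y) :
    (1 - lam) * (X / (X + Y)) / (1 - lam * (X / (X + Y)))
      = (1 - lam) * X / ((1 - lam) * X + Y) := by
  obtain ⟨hl0, hl1⟩ := hl
  have hXY : 0 < X + Y := by linarith
  have h1 : 1 - lam * (X / (X + Y)) = ((1 - lam) * X + Y) / (X + Y) := by
    field_simp; ring
  have h2 : 0 < (1 - lam) * X + Y := by nlinarith
  rw [h1]; field_simp

set_option maxHeartbeats 1000000 in
/-- Lemma `lemm last`: `φ(φ(p̂)) < p** < p̂`, i.e. the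
encouragement cut-off and the social-planner cut-off are within two Bayesian
updates of each other. -/
theorem phat_pstarstar_comparison
    (c g lam δ : ℝ) (hc : 0 < c) (hg : 0 < g)
    (hlam : lam ∈ Set.Ioo (0 : ℝ) 1) (hδ : δ ∈ Set.Ioo (0 : ℝ) 1) :
    (fun p : ℝ => (1 - lam) * p / (1 - lam * p))
        ((fun p : ℝ => (1 - lam) * p / (1 - lam * p))
          (c * (1 - δ) / (c * (1 - δ) + g * (1 - δ + lam * δ * (1 + δ - lam * δ)))))
      < c * (1 - Real.sqrt δ) /
          (c * (1 - Real.sqrt δ) + g * (1 - Real.sqrt δ * (1 - lam))) ∧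
    c * (1 - Real.sqrt δ) / (c * (1 - Real.sqrt δ) + g * (1 - Real.sqrt δ * (1 - lam)))
      < c * (1 - δ) / (c * (1 - δ) + g * (1 - δ + lam * δ * (1 + δ - lam * δ))) := by
  obtain ⟨hl0, hl1⟩ := hlam
  obtain ⟨hd0, hd1⟩ := hδ
  obtain ⟨s, hs0, hs1, rfl⟩ : ∃ s : ℝ, 0 < s ∧ s < 1 ∧ δ = s ^ 2 := by
    refine ⟨Real.sqrt δ, Real.sqrt_pos.mpr hd0, ?_, (Real.sq_sqrt hd0.le).symm⟩
    rw [show (1:ℝ) = Real.sqrt 1 by simp]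
    exact Real.sqrt_lt_sqrt hd0.le hd1
  rw [Real.sqrt_sq hs0.le]
  -- abbreviations
  have hA : 0 < c * (1 - s ^ 2) := by nlinarith
  have h3 : (0:ℝ) < 1 + s ^ 2 - lam * s ^ 2 := by nlinarith [mul_pos hs0 hs0]
  have hBt : (0:ℝ) < 1 - s ^ 2 + lam * s ^ 2 * (1 + s ^ 2 - lam * s ^ 2) := by
    nlinarith [mul_pos (mul_pos hl0 (mul_pos hs0 hs0)) h3]
  have hB : 0 < g * (1 - s ^ 2 + lam * s ^ 2 * (1 + s ^ 2 - lam * s ^ 2)) := mul_pos hg hBt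
  have hA' : 0 < c * (1 - s) := by nlinarith
  have hB't : (0:ℝ) < 1 - s * (1 - lam) := by nlinarith [mul_pos hs0 hl0]
  have hB' : 0 < g * (1 - s * (1 - lam)) := mul_pos hg hB't
  have hD : 0 < c * (1 - s ^ 2) + g * (1 - s ^ 2 + lam * s ^ 2 * (1 + s ^ 2 - lam * s ^ 2)) :=
    by linarith
  have hD' : 0 < c * (1 - s) + g * (1 - s * (1 - lam)) := by linarith
  have e1 := phi_div lam (c * (1 - s ^ 2))
      (g * (1 - s ^ 2 + lam * s ^ 2 * (1 + s ^ 2 - lam * s ^ 2))) ⟨hl0, hl1⟩ hA hB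
  have hA1 : 0 < (1 - lam) * (c * (1 - s ^ 2)) := by nlinarith
  have e2 := phi_div lam ((1 - lam) * (c * (1 - s ^ 2)))
      (g * (1 - s ^ 2 + lam * s ^ 2 * (1 + s ^ 2 - lam * s ^ 2))) ⟨hl0, hl1⟩ hA1 hB
  simp only
  rw [e1]
  rw [show (1 - lam) * (c * (1 - s ^ 2)) / ((1 - lam) * (c * (1 - s ^ 2)) +
      g * (1 - s ^ 2 + lam * s ^ 2 * (1 + s ^ 2 - lam * s ^ 2)))
    = (1 - lam) * (c * (1 - s ^ 2)) / ((1 - lam) * (c * (1 - s ^ 2)) +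
      g * (1 - s ^ 2 + lam * s ^ 2 * (1 + s ^ 2 - lam * s ^ 2))) from rfl, e2]
  have hA2 : 0 < (1 - lam) * ((1 - lam) * (c * (1 - s ^ 2))) := by nlinarith
  constructor
  · rw [div_lt_div_iff₀ (by linarith) hD']
    have hF : (0:ℝ) < (1 - (1 - lam) ^ 2 * s) + (1 - lam) * (1 - s ^ 2) ^ 2
        + (1 - lam) * lam * s ^ 2 := by
      have h4 : (1 - lam) ^ 2 * s < 1 := by nlinarith [sq_nonneg (1 - lam)]
      have h5 : (0:ℝ) ≤ (1 - lam) * (1 - s ^ 2) ^ 2 := mul_nonneg (by linarith) (sq_nonneg _)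
      nlinarith [mul_pos (mul_pos (sub_pos.mpr hl1) hl0) (mul_pos hs0 hs0)]
    have key : (1 - lam) ^ 2 * (1 - s ^ 2) * (1 - s * (1 - lam))
        < (1 - s) * (1 - s ^ 2 + lam * s ^ 2 * (1 + s ^ 2 - lam * s ^ 2)) := by
      nlinarith [mul_pos (mul_pos (sub_pos.mpr hs1) hl0) hF]
    nlinarith [mul_lt_mul_of_pos_left key (mul_pos hc hg)]
  · rw [div_lt_div_iff₀ hD' hD]
    have hG : (0:ℝ) < 1 - s ^ 3 * (1 - lam) := by
      nlinarith [mul_pos (mul_pos hs0 hs0) hs0, mul_pos (mul_pos (mul_pos hs0 hs0) hs0) hl0]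
    have key : (1 - s) * (1 - s ^ 2 + lam * s ^ 2 * (1 + s ^ 2 - lam * s ^ 2))
        < (1 - s ^ 2) * (1 - s * (1 - lam)) := by
      nlinarith [mul_pos (mul_pos (mul_pos (sub_pos.mpr hs1) hl0) hs0) hG]
    nlinarith [mul_lt_mul_of_pos_left key (mul_pos hc hg)]
end

section
/- Define p̄ := c(1−δ)/(c(1−δ) + g·(1 − δ(1−λ)²)). Then φ(p̂) < p̄ < p̂ and φ(p̄) ≤ p** ≤ p̄, where φ(p) := (1−λ)p/(1−λp), p̂ := c(1−δ)/(c(1−δ) + g·(1−δ + λδ(1+δ−λδ))), and p** := c(1−√δ)/(c(1−√δ) + g·(1 − √δ(1−λ))). -/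
lemma frac_lt_frac (u v u' v' : ℝ) (hu : 0 < u) (hv : 0 < v) (hu' : 0 < u')
    (hv' : 0 < v') (h : u * v' < u' * v) : u / (u + v) < u' / (u' + v') := by
  rw [div_lt_div_iff₀ (by linarith) (by linarith)]
  nlinarith

lemma frac_le_frac (u v u' v' : ℝ) (hu : 0 < u) (hv : 0 < v) (hu' : 0 < u')
    (hv' : 0 < v') (h : u * v' ≤ u' * v) : u / (u + v) ≤ u' / (u' + v') := by
  rw [div_le_div_iff₀ (by linarith) (by linarith)]
  nlinarith

lemma phi_frac (a x lam : ℝ) (ha : 0 < a) (hx : 0 < x) (hlam : lam < 1) :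
    (1 - lam) * (a / (a + x)) / (1 - lam * (a / (a + x)))
      = (1 - lam) * a / ((1 - lam) * a + x) := by
  have h1 : a + x ≠ 0 := by positivity
  have h2 : (1 - lam) * a + x ≠ 0 := by
    have : 0 < (1 - lam) * a + x := by nlinarith
    linarith
  have h3 : 1 - lam * (a / (a + x)) = ((1 - lam) * a + x) / (a + x) := by
    field_simp; ring
  rw [h3]
  field_simp

/-- With `p̄ = c(1−δ)/(c(1−δ) + g(1 − δ(1−λ)²))`, one has
`φ(p̂) < p̄ < p̂` and `φ(p̄) ≤ p** ≤ p̄`. -/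
theorem pbar_comparisons
    (c g lam δ : ℝ) (hc : 0 < c) (hg : 0 < g)
    (hlam : lam ∈ Set.Ioo (0 : ℝ) 1) (hδ : δ ∈ Set.Ioo (0 : ℝ) 1) :
    (fun p : ℝ => (1 - lam) * p / (1 - lam * p))
        (c * (1 - δ) / (c * (1 - δ) + g * (1 - δ + lam * δ * (1 + δ - lam * δ))))
      < c * (1 - δ) / (c * (1 - δ) + g * (1 - δ * (1 - lam) ^ 2)) ∧
    c * (1 - δ) / (c * (1 - δ) + g * (1 - δ * (1 - lam) ^ 2))
      < c * (1 - δ) / (c * (1 - δ) + g * (1 - δ + lam * δ * (1 + δ - lam * δ))) ∧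
    (fun p : ℝ => (1 - lam) * p / (1 - lam * p))
        (c * (1 - δ) / (c * (1 - δ) + g * (1 - δ * (1 - lam) ^ 2)))
      ≤ c * (1 - Real.sqrt δ) /
          (c * (1 - Real.sqrt δ) + g * (1 - Real.sqrt δ * (1 - lam))) ∧
    c * (1 - Real.sqrt δ) / (c * (1 - Real.sqrt δ) + g * (1 - Real.sqrt δ * (1 - lam)))
      ≤ c * (1 - δ) / (c * (1 - δ) + g * (1 - δ * (1 - lam) ^ 2)) := by
  obtain ⟨hl0, hl1⟩ := hlam
  obtain ⟨hd0, hd1⟩ := hδ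
  set s := Real.sqrt δ with hs
  have hs2 : s ^ 2 = δ := Real.sq_sqrt hd0.le
  have hs0 : 0 < s := Real.sqrt_pos.mpr hd0
  have hs1 : s < 1 := by
    rw [hs, show (1:ℝ) = Real.sqrt 1 by simp]
    exact Real.sqrt_lt_sqrt hd0.le hd1
  have hld : lam * δ < 1 := by nlinarith
  have ha : 0 < c * (1 - δ) := by nlinarith
  have hAin : 0 < 1 - δ + lam * δ * (1 + δ - lam * δ) := by
    nlinarith [mul_pos (mul_pos hl0 hd0) hd0, mul_pos (mul_pos hl0 hd0) (sub_pos.mpr hld)]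
  have hA : 0 < g * (1 - δ + lam * δ * (1 + δ - lam * δ)) := mul_pos hg hAin
  have hBin : 0 < 1 - δ * (1 - lam) ^ 2 := by nlinarith [sq_nonneg (1 - lam)]
  have hB : 0 < g * (1 - δ * (1 - lam) ^ 2) := mul_pos hg hBin
  have h1 : 0 < 1 - s * (1 - lam) := by nlinarith
  have hC : 0 < g * (1 - s * (1 - lam)) := mul_pos hg h1
  have hcs : 0 < c * (1 - s) := by nlinarith
  have hla : 0 < (1 - lam) * (c * (1 - δ)) := by nlinarith
  refine ⟨?_, ?_, ?_, ?_⟩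
  · show (1 - lam) * _ / _ < _
    rw [phi_frac _ _ _ ha hA hl1]
    refine frac_lt_frac _ _ _ _ hla hA ha hB ?_
    -- need (1-lam)*a*(g*B) < a*(g*A), i.e. (1-lam)*B < A
    have hq : 0 < (1 - lam)^2 + 3*(1 - lam) + 4 := by nlinarith [sq_nonneg (1 - lam)]
    have key : 0 < 1 - δ * (1 - lam) * (2 - lam - δ) := by
      nlinarith [sq_nonneg (1 + (1 - lam) - 2 * δ), mul_pos hl0 hq,
        mul_pos hd0 (sub_pos.mpr hl1), sub_pos.mpr hl1]
    nlinarith [mul_pos (mul_pos (mul_pos ha hg) hl0) key]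
  · refine frac_lt_frac _ _ _ _ ha hB ha hA ?_
    nlinarith [mul_pos (mul_pos (mul_pos ha hg)
      (mul_pos hl0 hd0)) (mul_pos (sub_pos.mpr hl1) (sub_pos.mpr hd1))]
  · show (1 - lam) * _ / _ ≤ _
    rw [phi_frac _ _ _ ha hB hl1]
    refine frac_le_frac _ _ _ _ hla hB hcs hC ?_
    rw [show δ = s ^ 2 from hs2.symm]
    nlinarith [mul_pos (mul_pos (mul_pos hc hg) hl0)
      (mul_pos (sub_pos.mpr hs1) h1)]
  · refine frac_le_frac _ _ _ _ hcs hC ha hB ?_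
    rw [show δ = s ^ 2 from hs2.symm]
    nlinarith [mul_pos (mul_pos (mul_pos (mul_pos hc hg) (mul_pos hl0 hs0))
      (sub_pos.mpr hs1)) h1]
end

section
/- For every p₀ ∈ (0,1), define N̂ := inf{n ≥ 0 : φ^n(p₀) < p̂} and N** := inf{n ≥ 0 : φ^n(p₀) < p**}. Then both are finite and N** − 2 ≤ N̂ ≤ N**, where φ(p) := (1−λ)p/(1−λp), p̂ := c(1−δ)/(c(1−δ) + g·(1−δ + λδ(1+δ−λδ))), and p** := c(1−√δ)/(c(1−√δ) + g·(1 − √δ(1−λ))). -/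
/-!
In odds `p / (1 - p)` the update `φ` is multiplication by `1 - λ`, so `φⁿ(p₀) < t` exactly when
`(1 - λ)ⁿ · odds p₀ < odds t`; in particular `φⁿ(p₀) → 0` and both cutoff times are finite.
Then `N̂ ≤ N**` follows from `p** ≤ p̂`, and `N** ≤ N̂ + 2` from `(1 - λ)² · odds p̂ ≤ odds p**`.
With `s = √δ` both comparisons are polynomial inequalities in `λ` and `s` whose differences
factor into visibly nonnegative terms.
-/

open Filter Topology

theorem Nat.sInf_le_sInf_add_of_imp {P Q : ℕ → Prop} {k : ℕ} (h : ∀ n, P n → Q (n + k))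
    (hP : ∃ n, P n) : sInf {n | Q n} ≤ sInf {n | P n} + k :=
  Nat.sInf_le (h _ (Nat.sInf_mem hP))

/-- The paper's updating map `φ`. -/
noncomputable def bayesUpdate (lam p : ℝ) : ℝ := (1 - lam) * p / (1 - lam * p)

section BayesUpdate

variable {lam p : ℝ}

/-- After `n` failures the odds `p / (1 - p)` have been multiplied by `(1 - lam) ^ n`. -/
theorem bayesUpdate_iterate (hlam : lam < 1) (hp0 : 0 ≤ p) (hp1 : p < 1) (n : ℕ) :
    (bayesUpdate lam)^[n] p = (1 - lam) ^ n * p / ((1 - lam) ^ n * p + (1 - p)) := by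
  induction n with
  | zero => simp
  | succ n ih =>
    have hμ : 0 ≤ 1 - lam := by linarith
    have hX : 0 ≤ (1 - lam) ^ n * p := by positivity
    have hD : (1 - lam) ^ n * p + (1 - p) ≠ 0 := by linarith
    have hD' : (1 - lam) * ((1 - lam) ^ n * p) + (1 - p) ≠ 0 := by
      linarith [mul_nonneg hμ hX]
    have hdenom : 1 - lam * ((1 - lam) ^ n * p / ((1 - lam) ^ n * p + (1 - p)))
        = ((1 - lam) * ((1 - lam) ^ n * p) + (1 - p)) / ((1 - lam) ^ n * p + (1 - p)) := by
      field_simp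
      ring
    rw [Function.iterate_succ_apply', ih, bayesUpdate, hdenom, pow_succ]
    field_simp

theorem bayesUpdate_iterate_lt_div_add_iff (hlam : lam < 1) (hp0 : 0 ≤ p) (hp1 : p < 1)
    {x y : ℝ} (hxy : 0 < x + y) (n : ℕ) :
    (bayesUpdate lam)^[n] p < x / (x + y) ↔ (1 - lam) ^ n * p * y < x * (1 - p) := by
  have hμ : 0 ≤ 1 - lam := by linarith
  have hX : 0 ≤ (1 - lam) ^ n * p := by positivity
  rw [bayesUpdate_iterate hlam hp0 hp1, div_lt_div_iff₀ (by linarith) hxy]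
  constructor <;> intro h <;> linarith

theorem tendsto_bayesUpdate_iterate (hlam0 : 0 < lam) (hlam1 : lam < 1) (hp0 : 0 ≤ p)
    (hp1 : p < 1) : Tendsto (fun n ↦ (bayesUpdate lam)^[n] p) atTop (𝓝 0) := by
  simp_rw [bayesUpdate_iterate hlam1 hp0 hp1]
  have h : Tendsto (fun n ↦ (1 - lam) ^ n * p) atTop (𝓝 0) := by
    simpa using (tendsto_pow_atTop_nhds_zero_of_lt_one (by linarith) (by linarith)).mul_const p
  simpa only [zero_add, zero_div, Pi.div_def] using h.div (h.add_const (1 - p)) (by linarith)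

theorem bayesUpdate_iterate_add_lt (hlam : lam < 1) (hp0 : 0 ≤ p) (hp1 : p < 1)
    {x₁ y₁ x₂ y₂ : ℝ} (hx₁ : 0 < x₁) (hy₁ : 0 < y₁) (hx₂ : 0 < x₂) (hy₂ : 0 < y₂) {k n : ℕ}
    (hodds : (1 - lam) ^ k * x₁ * y₂ ≤ x₂ * y₁)
    (h : (bayesUpdate lam)^[n] p < x₁ / (x₁ + y₁)) :
    (bayesUpdate lam)^[n + k] p < x₂ / (x₂ + y₂) := by
  rw [bayesUpdate_iterate_lt_div_add_iff hlam hp0 hp1 (by positivity)] at h ⊢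
  have hμ : 0 < 1 - lam := by linarith
  have hp : 0 ≤ 1 - p := by linarith
  refine lt_of_mul_lt_mul_right ?_ hy₁.le
  calc (1 - lam) ^ (n + k) * p * y₂ * y₁ = ((1 - lam) ^ k * y₂) * ((1 - lam) ^ n * p * y₁) := by
        ring
    _ < ((1 - lam) ^ k * y₂) * (x₁ * (1 - p)) := by gcongr
    _ = ((1 - lam) ^ k * x₁ * y₂) * (1 - p) := by ring
    _ ≤ (x₂ * y₁) * (1 - p) := by gcongr
    _ = x₂ * (1 - p) * y₁ := by ring

end BayesUpdate

section Cutoffs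

variable {lam s : ℝ}

/- With `s = √δ`, so that `odds p̂ = c (1 - s²) / (g (1 - s² + λs²(1 + s² - λs²)))` and
`odds p** = c (1 - s) / (g (1 - s (1 - λ)))`, the next two lemmas are `odds p** ≤ odds p̂` and
`(1 - λ)² · odds p̂ ≤ odds p**` with the denominators cleared. -/
theorem pStarStar_odds_le_pHat_odds (hlam : 0 ≤ lam) (hs0 : 0 ≤ s) (hs1 : s ≤ 1) :
    (1 - s) * (1 - s ^ 2 + lam * s ^ 2 * (1 + s ^ 2 - lam * s ^ 2))
      ≤ (1 - s ^ 2) * (1 - s * (1 - lam)) := by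
  have hs3 : s ^ 3 ≤ 1 := pow_le_one₀ hs0 hs1
  have hfactor : 0 ≤ 1 - (1 - lam) * s ^ 3 := by nlinarith [pow_nonneg hs0 3]
  rw [← sub_nonneg, show (1 - s ^ 2) * (1 - s * (1 - lam))
      - (1 - s) * (1 - s ^ 2 + lam * s ^ 2 * (1 + s ^ 2 - lam * s ^ 2))
      = (1 - s) * lam * s * (1 - (1 - lam) * s ^ 3) by ring]
  exact mul_nonneg (mul_nonneg (mul_nonneg (by linarith) hlam) hs0) hfactor

theorem sq_mul_pHat_odds_le_pStarStar_odds (hlam0 : 0 ≤ lam) (hlam1 : lam ≤ 1) (hs1 : s ≤ 1) :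
    (1 - lam) ^ 2 * (1 - s ^ 2) * (1 - s * (1 - lam))
      ≤ (1 - s) * (1 - s ^ 2 + lam * s ^ 2 * (1 + s ^ 2 - lam * s ^ 2)) := by
  have hμ2 : (1 - lam) ^ 2 * s ≤ 1 := by
    have : (1 - lam) ^ 2 ≤ 1 := pow_le_one₀ (by linarith) (by linarith)
    nlinarith
  rw [← sub_nonneg, show (1 - s) * (1 - s ^ 2 + lam * s ^ 2 * (1 + s ^ 2 - lam * s ^ 2))
      - (1 - lam) ^ 2 * (1 - s ^ 2) * (1 - s * (1 - lam))
      = (1 - s) * lam * ((1 - (1 - lam) ^ 2 * s) + (1 - lam) * ((1 - s ^ 2) ^ 2 + lam * s ^ 2))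
      by ring]
  have hμ : 0 ≤ 1 - lam := by linarith
  have : 0 ≤ (1 - lam) * ((1 - s ^ 2) ^ 2 + lam * s ^ 2) := by positivity
  exact mul_nonneg (mul_nonneg (by linarith) hlam0) (by linarith)

end Cutoffs

/-- For every prior `p₀ ∈ (0,1)`, the cut-off times
`N̂ = inf{n : φⁿ(p₀) < p̂}` and `N** = inf{n : φⁿ(p₀) < p**}` are finite
(the defining sets are nonempty) and satisfy `N** − 2 ≤ N̂ ≤ N**`. -/
theorem Nhat_Nstarstar_comparison
    (c g lam δ : ℝ) (hc : 0 < c) (hg : 0 < g)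
    (hlam : lam ∈ Set.Ioo (0 : ℝ) 1) (hδ : δ ∈ Set.Ioo (0 : ℝ) 1) :
    ∀ p₀ ∈ Set.Ioo (0 : ℝ) 1,
      {n : ℕ | (fun p : ℝ => (1 - lam) * p / (1 - lam * p))^[n] p₀
          < c * (1 - δ) / (c * (1 - δ) + g * (1 - δ + lam * δ * (1 + δ - lam * δ)))}.Nonempty ∧
      {n : ℕ | (fun p : ℝ => (1 - lam) * p / (1 - lam * p))^[n] p₀
          < c * (1 - Real.sqrt δ) /
              (c * (1 - Real.sqrt δ) + g * (1 - Real.sqrt δ * (1 - lam)))}.Nonempty ∧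
      sInf {n : ℕ | (fun p : ℝ => (1 - lam) * p / (1 - lam * p))^[n] p₀
          < c * (1 - Real.sqrt δ) /
              (c * (1 - Real.sqrt δ) + g * (1 - Real.sqrt δ * (1 - lam)))}
        ≤ sInf {n : ℕ | (fun p : ℝ => (1 - lam) * p / (1 - lam * p))^[n] p₀
            < c * (1 - δ) /
                (c * (1 - δ) + g * (1 - δ + lam * δ * (1 + δ - lam * δ)))} + 2 ∧
      sInf {n : ℕ | (fun p : ℝ => (1 - lam) * p / (1 - lam * p))^[n] p₀
          < c * (1 - δ) / (c * (1 - δ) + g * (1 - δ + lam * δ * (1 + δ - lam * δ)))}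
        ≤ sInf {n : ℕ | (fun p : ℝ => (1 - lam) * p / (1 - lam * p))^[n] p₀
            < c * (1 - Real.sqrt δ) /
                (c * (1 - Real.sqrt δ) + g * (1 - Real.sqrt δ * (1 - lam)))} := by
  obtain ⟨hl0, hl1⟩ := hlam
  obtain ⟨s, hs0, hs1, rfl⟩ : ∃ s, 0 < s ∧ s < 1 ∧ s ^ 2 = δ :=
    ⟨√δ, Real.sqrt_pos.2 hδ.1, (Real.sqrt_lt' one_pos).2 (by rw [one_pow]; exact hδ.2),
      Real.sq_sqrt hδ.1.le⟩
  rw [Real.sqrt_sq hs0.le]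
  rintro p₀ ⟨hp0, hp1⟩
  rw [show (fun p : ℝ => (1 - lam) * p / (1 - lam * p)) = bayesUpdate lam from rfl]
  have hs1' : 0 < 1 - s := by linarith
  have hs2 : 0 < 1 - s ^ 2 := by nlinarith
  have hxH : 0 < c * (1 - s ^ 2) := by positivity
  have hyH : 0 < g * (1 - s ^ 2 + lam * s ^ 2 * (1 + s ^ 2 - lam * s ^ 2)) := by
    have : 0 < 1 + s ^ 2 - lam * s ^ 2 := by nlinarith
    positivity
  have hxS : 0 < c * (1 - s) := by positivity
  have hyS : 0 < g * (1 - s * (1 - lam)) := by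
    have : s * (1 - lam) < 1 := by nlinarith
    have : 0 < 1 - s * (1 - lam) := by linarith
    positivity
  have hne : ∀ x y : ℝ, 0 < x → 0 < y → ∃ n, (bayesUpdate lam)^[n] p₀ < x / (x + y) :=
    fun x y hx hy ↦ ((tendsto_bayesUpdate_iterate hl0 hl1 hp0.le hp1).eventually
      (gt_mem_nhds (by positivity))).exists
  have hodds₀ := pStarStar_odds_le_pHat_odds hl0.le hs0.le hs1.le
  have hodds₂ := sq_mul_pHat_odds_le_pStarStar_odds hl0.le hl1.le hs1.le
  refine ⟨hne _ _ hxH hyH, hne _ _ hxS hyS,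
    Nat.sInf_le_sInf_add_of_imp (fun n ↦ bayesUpdate_iterate_add_lt hl1 hp0.le hp1
      hxH hyH hxS hyS (k := 2) ?_) (hne _ _ hxH hyH),
    (Nat.sInf_le_sInf_add_of_imp (fun n ↦ bayesUpdate_iterate_add_lt hl1 hp0.le hp1
      hxS hyS hxH hyH (k := 0) ?_) (hne _ _ hxS hyS)).trans_eq (add_zero _)⟩
  · linear_combination (c * g) * hodds₂
  · linear_combination (c * g) * hodds₀
end

section
/- For every η > 0 there exists N ∈ ℕ such that for all natural numbers n ≥ N, setting δ = 1/2 and λ = 1/n, one has φ^{⌊ηn⌋}(p̂) < p*(√δ), where φ(p) := (1−λ)p/(1−λp), φ^k denotes the k-fold iterate, p̂ := c(1−δ)/(c(1−δ) + g·(1−δ + λδ(1+δ−λδ))), and p*(√δ) := c(1−√δ)/(c(1−√δ) + g·(1 − √δ(1−λ))) are computed with these values of δ and λ. -/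
lemma phi_iter_closed (lam A B : ℝ) (hlam1 : lam < 1) (hA : 0 < A) (hB : 0 < B) (k : ℕ) :
    (fun p : ℝ => (1 - lam) * p / (1 - lam * p))^[k] (A / (A + B))
      = (1 - lam)^k * A / ((1 - lam)^k * A + B) := by
  induction k with
  | zero => simp
  | succ k ih =>
    rw [Function.iterate_succ_apply', ih]
    have hr : 0 < (1 - lam)^k := pow_pos (by linarith) k
    have hD : 0 < (1 - lam)^k * A + B := add_pos (mul_pos hr hA) hB
    have hD' : 0 < (1 - lam)^(k+1) * A + B :=
      add_pos (mul_pos (pow_pos (by linarith) _) hA) hB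
    have h2 : 1 - lam * ((1 - lam)^k * A / ((1 - lam)^k * A + B))
        = ((1 - lam)^(k+1) * A + B) / ((1 - lam)^k * A + B) := by
      field_simp
      ring
    rw [h2, ← mul_div_assoc, div_div_div_eq]
    rw [div_eq_div_iff (by positivity) hD'.ne']
    ring

set_option maxHeartbeats 2000000 in
/-- Lemma `lemm overexp`: For every `η > 0` and all large `n`,
with `δ = 1/2` and `λ = 1/n`, one has `φ^⌊ηn⌋(p̂) < p*(√δ)`. -/
theorem phi_iter_phat_lt_pstar_sqrt
    (c g : ℝ) (hc : 0 < c) (hg : 0 < g) :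
    ∀ η : ℝ, 0 < η → ∃ N : ℕ, ∀ n : ℕ, N ≤ n →
      (fun p : ℝ => (1 - 1 / (n : ℝ)) * p / (1 - 1 / (n : ℝ) * p))^[⌊η * (n : ℝ)⌋₊]
          (c * (1 - (1:ℝ)/2) / (c * (1 - (1:ℝ)/2) +
            g * (1 - (1:ℝ)/2 + (1 / (n : ℝ)) * ((1:ℝ)/2) *
              (1 + (1:ℝ)/2 - (1 / (n : ℝ)) * ((1:ℝ)/2)))))
        < c * (1 - Real.sqrt ((1:ℝ)/2)) /
            (c * (1 - Real.sqrt ((1:ℝ)/2)) +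
              g * (1 - Real.sqrt ((1:ℝ)/2) * (1 - 1 / (n : ℝ)))) := by
  intro η hη
  set s : ℝ := Real.sqrt ((1:ℝ)/2) with hs
  have hs0 : 0 < s := Real.sqrt_pos.mpr (by norm_num)
  have hs1 : s < 1 := by
    rw [hs, show (1:ℝ) = Real.sqrt 1 from Real.sqrt_one.symm]
    exact Real.sqrt_lt_sqrt (by norm_num) (by norm_num)
  refine ⟨⌈2/η⌉₊ + ⌈2*s/((1-s)*η)⌉₊ + 2, fun n hn => ?_⟩
  have hn2 : 2 ≤ n := by omega
  have hnR : (2:ℝ) ≤ (n:ℝ) := by exact_mod_cast hn2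
  have hnpos : (0:ℝ) < (n:ℝ) := by linarith
  have hne : (n:ℝ) ≠ 0 := hnpos.ne'
  set lam : ℝ := 1 / (n : ℝ) with hlamdef
  have hlam0 : 0 < lam := by positivity
  have hlam_half : lam ≤ 1/2 := by
    rw [hlamdef, div_le_div_iff₀ hnpos (by norm_num)]; linarith
  have hlam1 : lam < 1 := by linarith
  -- bounds coming from the choice of N
  have hceil1 : (2/η : ℝ) ≤ (n:ℝ) := by
    have h1 : (⌈2/η⌉₊ : ℝ) ≤ (n:ℝ) := by exact_mod_cast le_trans (by omega) hn
    exact le_trans (Nat.le_ceil _) h1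
  have h1n : lam ≤ η/2 := by
    rw [hlamdef, div_le_div_iff₀ hnpos (by norm_num)]
    rw [div_le_iff₀ hη] at hceil1
    linarith
  have hceil2 : (2*s/((1-s)*η) : ℝ) < (n:ℝ) := by
    have h1 : (⌈2*s/((1-s)*η)⌉₊ : ℝ) + 1 ≤ (n:ℝ) := by
      exact_mod_cast (by omega : ⌈2*s/((1-s)*η)⌉₊ + 1 ≤ n)
    have := Nat.le_ceil (2*s/((1-s)*η))
    linarith
  have hden : 0 < (1-s)*η := by
    have : 0 < 1 - s := by linarith
    positivity
  have h2n : s * lam < (1-s)*η/2 := by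
    rw [div_lt_iff₀ hden] at hceil2
    rw [hlamdef, mul_one_div, div_lt_iff₀ hnpos]
    nlinarith
  -- abbreviations
  set k : ℕ := ⌊η * (n : ℝ)⌋₊ with hk
  set r : ℝ := (1 - lam)^k with hrdef
  have hr0 : 0 < r := pow_pos (by linarith) k
  -- exponential bound on r
  have hrk : η/2 < lam * k := by
    have h5 : η * (n:ℝ) - 1 < (k:ℝ) := Nat.sub_one_lt_floor (η * (n:ℝ))
    have hlk : lam * (k:ℝ) = (k:ℝ) / (n:ℝ) := by
      rw [hlamdef]; ring
    rw [hlk, lt_div_iff₀ hnpos]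
    have : lam * (n:ℝ) = 1 := by rw [hlamdef]; field_simp
    nlinarith
  have hr_exp : r < Real.exp (-(η/2)) := by
    have h1 : (1 - lam) ≤ Real.exp (-lam) := by
      have := Real.add_one_le_exp (-lam); linarith
    have h0 : (0:ℝ) ≤ 1 - lam := by linarith
    have h2 : r ≤ (Real.exp (-lam))^k := by
      rw [hrdef]; exact pow_le_pow_left₀ h0 h1 k
    have h3 : (Real.exp (-lam))^k = Real.exp (-(lam * k)) := by
      rw [← Real.exp_nat_mul]; congr 1; ring
    have h4 : Real.exp (-(lam * k)) < Real.exp (-(η/2)) :=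
      Real.exp_lt_exp.mpr (by linarith)
    calc r ≤ (Real.exp (-lam))^k := h2
      _ = Real.exp (-(lam * k)) := h3
      _ < Real.exp (-(η/2)) := h4
  have hexp : Real.exp (-(η/2)) ≤ 1/(1+η/2) := by
    have h1 : 1 + η/2 ≤ Real.exp (η/2) := by
      have := Real.add_one_le_exp (η/2); linarith
    rw [Real.exp_neg, inv_eq_one_div]
    exact one_div_le_one_div_of_le (by linarith) h1
  have hr1 : r < 1/(1+η/2) := lt_of_lt_of_le hr_exp hexp
  have h7 : r * (1+η/2) < 1 := by
    rw [lt_div_iff₀ (by linarith : (0:ℝ) < 1+η/2)] at hr1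
    exact hr1
  -- key inequality
  have key : r * (1 - s + s * lam) < 1 - s := by
    nlinarith [h7, h2n, hr0, hs0, hs1, hlam0, mul_pos hs0 hlam0,
      mul_pos hr0 (mul_pos hs0 hlam0)]
  -- rewrite the iterate
  have hA : 0 < c * (1 - (1:ℝ)/2) := by norm_num; linarith
  have hB : 0 < g * (1 - (1:ℝ)/2 + lam * ((1:ℝ)/2) * (1 + (1:ℝ)/2 - lam * ((1:ℝ)/2))) := by
    have : (0:ℝ) < 1 - (1:ℝ)/2 + lam * ((1:ℝ)/2) * (1 + (1:ℝ)/2 - lam * ((1:ℝ)/2)) := by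
      nlinarith
    positivity
  rw [phi_iter_closed lam _ _ hlam1 hA hB k]
  have hA' : 0 < c * (1 - s) := by nlinarith
  have hB' : 0 < g * (1 - s * (1 - lam)) := by
    have h : (0:ℝ) < 1 - s * (1 - lam) := by nlinarith [mul_pos hs0 hlam0]
    exact mul_pos hg h
  rw [div_lt_div_iff₀ (by positivity) (by positivity)]
  have hcg : (0:ℝ) < c * g / 2 := by positivity
  have hkey2 : (c*g/2) * (r * (1 - s + s * lam)) < (c*g/2) * (1 - s) :=
    mul_lt_mul_of_pos_left key hcg
  have hterm : (0:ℝ) ≤ (c*g) * (1-s) * (lam * ((1:ℝ)/2) * (1 + (1:ℝ)/2 - lam * ((1:ℝ)/2))) := by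
    have h1 : (0:ℝ) ≤ 1 - s := by linarith
    have h2 : (0:ℝ) ≤ lam * ((1:ℝ)/2) * (1 + (1:ℝ)/2 - lam * ((1:ℝ)/2)) := by nlinarith
    have h3 : (0:ℝ) ≤ c * g := (mul_pos hc hg).le
    exact mul_nonneg (mul_nonneg h3 h1) h2
  nlinarith [hkey2, hterm]
end

section
/- One has φ(p*(δ)) ≥ p̂ if and only if δ·(1−λ) ≥ (√5 − 1)/2, where φ(p) := (1−λ)p/(1−λp), p*(δ) := c(1−δ)/(c(1−δ) + g·(1 − δ(1−λ))), and p̂ := c(1−δ)/(c(1−δ) + g·(1−δ + λδ(1+δ−λδ))). -/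
/-! Writing `p*(δ) = A / (A + B)` and `p̂ = A / (A + C)`, one Bayesian update turns `p*` into
`A / (A + B / (1 - λ))`, so `φ(p*) ≥ p̂` amounts to `B ≤ (1 - λ) C`. With `x = δ(1 - λ)` one has
`(1 - λ) C - B = g λ (x² + x - 1)`, and `(√5 - 1)/2` is the positive root of `x² + x - 1`. -/

lemma bayes_update_div_add {a b l : ℝ} (hab : a + b ≠ 0) :
    (1 - l) * (a / (a + b)) / (1 - l * (a / (a + b))) = (1 - l) * a / ((1 - l) * a + b) := by
  have hden : 1 - l * (a / (a + b)) = ((1 - l) * a + b) / (a + b) := by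
    field_simp
    ring
  rw [hden, mul_div_assoc, div_div_div_cancel_right₀ hab, ← mul_div_assoc]

lemma div_add_le_mul_div_mul_add_iff {a b c k : ℝ} (ha : 0 < a) (hac : 0 < a + c)
    (hkab : 0 < k * a + b) : a / (a + c) ≤ k * a / (k * a + b) ↔ b ≤ k * c := by
  rw [div_le_div_iff₀ hac hkab]
  constructor <;> intro h <;> nlinarith

lemma sqrt_five_sub_one_div_two_le_iff {x : ℝ} (hx : 0 ≤ x) :
    (√5 - 1) / 2 ≤ x ↔ 0 ≤ x ^ 2 + x - 1 := by
  have hs : √5 ^ 2 = 5 := Real.sq_sqrt (by norm_num)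
  have hfactor : x ^ 2 + x - 1 = (x - (√5 - 1) / 2) * (x + (√5 + 1) / 2) := by
    ring_nf
    rw [hs]
    ring
  rw [hfactor, mul_nonneg_iff_of_pos_right (by positivity), sub_nonneg]

/-- `φ(p*(δ)) ≥ p̂` if and only if `δ(1−λ) ≥ (√5 − 1)/2`. -/
theorem phi_pstar_ge_phat_iff
    (c g lam δ : ℝ) (hc : 0 < c) (hg : 0 < g)
    (hlam : lam ∈ Set.Ioo (0 : ℝ) 1) (hδ : δ ∈ Set.Ioo (0 : ℝ) 1) :
    (fun p : ℝ => (1 - lam) * p / (1 - lam * p))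
        (c * (1 - δ) / (c * (1 - δ) + g * (1 - δ * (1 - lam))))
      ≥ c * (1 - δ) / (c * (1 - δ) + g * (1 - δ + lam * δ * (1 + δ - lam * δ))) ↔
    δ * (1 - lam) ≥ (Real.sqrt 5 - 1) / 2 := by
  obtain ⟨hl0, hl1⟩ := hlam
  obtain ⟨hd0, hd1⟩ := hδ
  have hx0 : 0 < δ * (1 - lam) := mul_pos hd0 (by linarith)
  have hA : 0 < c * (1 - δ) := mul_pos hc (by linarith)
  have hB : 0 < g * (1 - δ * (1 - lam)) := mul_pos hg (by nlinarith)
  have hC : 0 < g * (1 - δ + lam * δ * (1 + δ - lam * δ)) := 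
    mul_pos hg (by nlinarith [mul_pos (mul_pos hl0 hd0) hx0])
  have hkA : 0 < (1 - lam) * (c * (1 - δ)) := mul_pos (by linarith) hA
  have hgap : (1 - lam) * (g * (1 - δ + lam * δ * (1 + δ - lam * δ))) - g * (1 - δ * (1 - lam))
      = g * lam * ((δ * (1 - lam)) ^ 2 + δ * (1 - lam) - 1) := by
    ring
  simp only [ge_iff_le]
  rw [bayes_update_div_add (by linarith),
    div_add_le_mul_div_mul_add_iff hA (by linarith) (by linarith),
    sqrt_five_sub_one_div_two_le_iff hx0.le, ← sub_nonneg, hgap]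
  exact mul_nonneg_iff_of_pos_left (mul_pos hg hl0)
end

section
/- Let δ, λ ∈ (0,1) satisfy δ·(1−λ) ≥ (√5 − 1)/2, and set α* := (1−δ + δλ(1−λ)²)/(1 − δ(1−λ)³). Then δ·(1 + α*·(1−λ)) ≥ 1; equivalently, the polynomial P(δ) := −δ²·((1−λ) + (1−λ)⁴) + δ·(1 + (1−λ) + (1−λ)³) − 1 satisfies P(δ) ≥ 0. -/
/-- If `δ(1−λ) ≥ (√5 − 1)/2` with `δ, λ ∈ (0,1)`, then with
`α* = (1−δ + δλ(1−λ)²)/(1 − δ(1−λ)³)` one has `δ(1 + α*(1−λ)) ≥ 1`;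
equivalently, `P(δ) = −δ²((1−λ) + (1−λ)⁴) + δ(1 + (1−λ) + (1−λ)³) − 1 ≥ 0`. -/
theorem alpha_star_inequality
    (δ lam : ℝ) (hδ : δ ∈ Set.Ioo (0 : ℝ) 1) (hlam : lam ∈ Set.Ioo (0 : ℝ) 1)
    (h : δ * (1 - lam) ≥ (Real.sqrt 5 - 1) / 2) :
    δ * (1 + (1 - δ + δ * lam * (1 - lam) ^ 2) / (1 - δ * (1 - lam) ^ 3) * (1 - lam)) ≥ 1 ∧
    -δ ^ 2 * ((1 - lam) + (1 - lam) ^ 4) + δ * (1 + (1 - lam) + (1 - lam) ^ 3) - 1 ≥ 0 := by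
  obtain ⟨hδ0, hδ1⟩ := hδ
  obtain ⟨hl0, hl1⟩ := hlam
  have hu0 : 0 < 1 - lam := by linarith
  have hu1 : 1 - lam < 1 := by linarith
  set x := δ * (1 - lam) with hx
  have hx0 : 0 < x := mul_pos hδ0 hu0
  have hx1 : x < 1 := by nlinarith
  have hs : Real.sqrt 5 ^ 2 = 5 := Real.sq_sqrt (by norm_num)
  have hs0 : 0 ≤ Real.sqrt 5 := Real.sqrt_nonneg 5
  have hx2 : x ^ 2 + x ≥ 1 := by nlinarith [sq_nonneg (2 * x + 1 - Real.sqrt 5)]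
  have hx35 : x ≥ 3 / 5 := by nlinarith
  have hδ3 : (1 - δ) * δ ^ 2 ≤ 4 / 27 := by nlinarith [sq_nonneg (3 * δ - 2)]
  have hx3 : x ^ 3 ≥ 27 / 125 := by nlinarith
  have hxcube : x * (1 - lam) ^ 2 * δ ^ 2 = x ^ 3 := by rw [hx]; ring
  have key : x * (1 - lam) ^ 2 + δ - 1 ≥ 0 := by nlinarith [sq_nonneg δ]
  have hP : -δ ^ 2 * ((1 - lam) + (1 - lam) ^ 4) + δ * (1 + (1 - lam) + (1 - lam) ^ 3) - 1 ≥ 0 := by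
    have hid : -δ ^ 2 * ((1 - lam) + (1 - lam) ^ 4) + δ * (1 + (1 - lam) + (1 - lam) ^ 3) - 1
        = (1 - x) * (x * (1 - lam) ^ 2 + δ - 1) := by rw [hx]; ring
    rw [hid]
    exact mul_nonneg (by linarith) key
  refine ⟨?_, hP⟩
  have hD : 0 < 1 - δ * (1 - lam) ^ 3 := by nlinarith
  rw [ge_iff_le, ← sub_nonneg]
  have hrew : δ * (1 + (1 - δ + δ * lam * (1 - lam) ^ 2) / (1 - δ * (1 - lam) ^ 3) * (1 - lam)) - 1
      = (-δ ^ 2 * ((1 - lam) + (1 - lam) ^ 4) + δ * (1 + (1 - lam) + (1 - lam) ^ 3) - 1)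
        / (1 - δ * (1 - lam) ^ 3) := by
    field_simp
    ring
  rw [hrew]
  exact div_nonneg hP hD.le
end
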